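/- Fix n ≥ 1, ν > 0 and σ ∈ (0,1/2). There exist constants C > 0 and c > 0 such that for every t ≥ 0 and every ξ ∈ ℝⁿ with 0 < |ξ| ≤ ρ: |∂ₜ( 𝒥₁(t,ξ) − e^{−(t/ν)|ξ|^{2(1−σ)}} )| ≤ C e^{−c(1+t)|ξ|^{2(1−σ)}} ( t|ξ|^{2(3−4σ)} + |ξ|^{2(2−3σ)} ) and |∂ₜ( 𝒥₂(t,ξ) − e^{−(t/ν)|ξ|^{2(1−σ)}}/(ν|ξ|^{2σ}) )| ≤ C e^{−c(1+t)|ξ|^{2(1−σ)}} ( t|ξ|^{2(3−5σ)} + |ξ|^{4(1−2σ)} ), where ∂ₜ denotes the derivative in t. -/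

import Mathlib

/-!
Write `a = (ν/2)|ξ|^{2σ}`, `b = |ξ|²` and `D = √(a² - b)`, so that `λ± = -a ± D` and the parabolic
rate is `μ = b/(2a) = |ξ|^{2(1-σ)}/ν`. Each time derivative has the form
`α e^{λ₊t} + β (e^{-μt} - e^{λ₊t})` with `λ₊ ≤ -μ`, and `e^{-μt} - e^{λ₊t} ≤ (-μ - λ₊) t e^{-μt}`.
Both `α` and `-μ - λ₊ = (a - D)²/(2a)` are small because `a - D = b/(a + D) ≤ b/a`, while
`|ξ| ≤ ρ` gives `|ξ| ≤ q a` with `q = 2^{-(1-2σ)} < 1`, hence `D ≥ (1 - q) a`. Finally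
`e^{-μt} ≤ e^{ρ^{2(1-σ)}/ν} e^{-(1+t)|ξ|^{2(1-σ)}/ν}` because `|ξ|^{2(1-σ)} ≤ ρ^{2(1-σ)}`.
-/

open Real

theorem exp_mul_sub_exp_mul_le (p q t : ℝ) :
    exp (q * t) - exp (p * t) ≤ (q - p) * t * exp (q * t) := by
  have hsplit : exp (p * t) = exp (q * t) * exp ((p - q) * t) := by
    rw [← exp_add]; ring_nf
  rw [hsplit]
  nlinarith [add_one_le_exp ((p - q) * t), exp_pos (q * t)]

theorem abs_mul_exp_add_mul_exp_sub_le {α β p q t : ℝ} (hβ : 0 ≤ β) (hpq : p ≤ q)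
    (ht : 0 ≤ t) :
    |α * exp (p * t) + β * (exp (q * t) - exp (p * t))|
      ≤ (|α| + β * (q - p) * t) * exp (q * t) := by
  have hle : exp (p * t) ≤ exp (q * t) := exp_le_exp.2 (mul_le_mul_of_nonneg_right hpq ht)
  calc _ ≤ |α * exp (p * t)| + |β * (exp (q * t) - exp (p * t))| := abs_add_le _ _
    _ = |α| * exp (p * t) + β * (exp (q * t) - exp (p * t)) := by
      rw [abs_mul, abs_mul, abs_of_pos (exp_pos _), abs_of_nonneg hβ,
        abs_of_nonneg (sub_nonneg.2 hle)]
    _ ≤ |α| * exp (q * t) + β * ((q - p) * t * exp (q * t)) := by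
      gcongr
      exact exp_mul_sub_exp_mul_le p q t
    _ = _ := by ring

theorem abs_mul_exp_add_mul_exp_sub_le_of_le {α β p q t A B X Y : ℝ} (hβ : 0 ≤ β)
    (hpq : p ≤ q) (ht : 0 ≤ t) (hA : 0 ≤ A) (hX : 0 ≤ X) (hB : 0 ≤ B) (hY : 0 ≤ Y)
    (hα : |α| ≤ A * Y) (hβpq : β * (q - p) ≤ B * X) :
    |α * exp (p * t) + β * (exp (q * t) - exp (p * t))|
      ≤ (A + B) * exp (q * t) * (t * X + Y) := by
  have hcoef : |α| + β * (q - p) * t ≤ (A + B) * (t * X + Y) := by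
    nlinarith [mul_le_mul_of_nonneg_right hβpq ht, mul_nonneg (mul_nonneg hA ht) hX,
      mul_nonneg hB hY]
  calc _ ≤ (|α| + β * (q - p) * t) * exp (q * t) := abs_mul_exp_add_mul_exp_sub_le hβ hpq ht
    _ ≤ (A + B) * (t * X + Y) * exp (q * t) := by gcongr
    _ = _ := by ring

theorem exp_neg_div_mul_le {ν K M t : ℝ} (hν : 0 ≤ ν) (hKM : K ≤ M) :
    exp (-(K / ν) * t) ≤ exp (M / ν) * exp (-(1 / ν) * (1 + t) * K) := by
  rw [← exp_add, exp_le_exp]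
  have : K / ν ≤ M / ν := div_le_div_of_nonneg_right hKM hν
  have e : -(1 / ν) * (1 + t) * K = -(K / ν) - (K / ν) * t := by ring
  rw [e]; linarith

theorem mul_exp_neg_div_mul_le {ν K M C C' t Z : ℝ} (hν : 0 ≤ ν) (hKM : K ≤ M) (hC : 0 ≤ C)
    (hCC' : C ≤ C') (hZ : 0 ≤ Z) :
    C * exp (-(K / ν) * t) * Z ≤ exp (M / ν) * C' * exp (-(1 / ν) * (1 + t) * K) * Z := by
  calc _ ≤ C' * (exp (M / ν) * exp (-(1 / ν) * (1 + t) * K)) * Z :=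
        mul_le_mul_of_nonneg_right
          (mul_le_mul hCC' (exp_neg_div_mul_le hν hKM) (exp_pos _).le (hC.trans hCC')) hZ
    _ = _ := by ring

section Roots

/-! `-a ± D` with `D² = a² - b` are the roots of `λ² + 2aλ + b`. -/

variable {a b D : ℝ}

theorem le_of_sq_eq_sq_sub (ha : 0 < a) (hD : 0 ≤ D) (hb : 0 ≤ b) (h : D ^ 2 = a ^ 2 - b) :
    D ≤ a := by
  nlinarith

theorem sub_le_div_of_sq_eq_sq_sub (ha : 0 < a) (hD : 0 ≤ D) (hb : 0 ≤ b)
    (h : D ^ 2 = a ^ 2 - b) : a - D ≤ b / a := by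
  rw [le_div_iff₀ ha]
  nlinarith [mul_nonneg hD (sub_nonneg.2 (le_of_sq_eq_sq_sub ha hD hb h))]

theorem sq_sub_le_div_of_sq_eq_sq_sub (ha : 0 < a) (hD : 0 ≤ D) (hb : 0 ≤ b)
    (h : D ^ 2 = a ^ 2 - b) : (a - D) ^ 2 ≤ b ^ 2 / a ^ 2 := by
  rw [← div_pow]
  exact pow_le_pow_left₀ (sub_nonneg.2 (le_of_sq_eq_sq_sub ha hD hb h))
    (sub_le_div_of_sq_eq_sq_sub ha hD hb h) 2

theorem neg_half_div_sub_root_eq (ha : a ≠ 0) (h : D ^ 2 = a ^ 2 - b) :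
    -(b / (2 * a)) - (-a + D) = (a - D) ^ 2 / (2 * a) := by
  rw [show b = a ^ 2 - D ^ 2 by linarith]
  field_simp
  ring

theorem root_le_neg_half_div (ha : 0 < a) (h : D ^ 2 = a ^ 2 - b) : -a + D ≤ -(b / (2 * a)) := by
  have := neg_half_div_sub_root_eq ha.ne' h
  have : 0 ≤ (a - D) ^ 2 / (2 * a) := by positivity
  linarith

theorem neg_half_div_sub_root_le (ha : 0 < a) (hD : 0 ≤ D) (hb : 0 ≤ b)
    (h : D ^ 2 = a ^ 2 - b) : -(b / (2 * a)) - (-a + D) ≤ b ^ 2 / (2 * a ^ 3) := by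
  rw [neg_half_div_sub_root_eq ha.ne' h]
  calc (a - D) ^ 2 / (2 * a) ≤ b ^ 2 / a ^ 2 / (2 * a) := by
        gcongr; exact sq_sub_le_div_of_sq_eq_sq_sub ha hD hb h
    _ = b ^ 2 / (2 * a ^ 3) := by field_simp

theorem abs_div_sub_half_div_le (ha : 0 < a) (hD : 0 < D) (hb : 0 ≤ b)
    (h : D ^ 2 = a ^ 2 - b) : |b / (2 * D) - b / (2 * a)| ≤ b ^ 2 / (2 * a ^ 2 * D) := by
  have hDa := le_of_sq_eq_sq_sub ha hD.le hb h
  have e : b / (2 * D) - b / (2 * a) = b * (a - D) / (2 * a * D) := by field_simp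
  rw [e, abs_of_nonneg (by have := sub_nonneg.2 hDa; positivity)]
  calc b * (a - D) / (2 * a * D) ≤ b * (b / a) / (2 * a * D) := by
        gcongr; exact sub_le_div_of_sq_eq_sq_sub ha hD.le hb h
    _ = b ^ 2 / (2 * a ^ 2 * D) := by field_simp

theorem abs_root_div_add_le (ha : 0 < a) (hD : 0 < D) (hb : 0 ≤ b)
    (h : D ^ 2 = a ^ 2 - b) :
    |(-a + D) / (2 * D) + b / (4 * a ^ 2)| ≤ 3 * b ^ 2 / (4 * a ^ 3 * D) := by
  have hDa := le_of_sq_eq_sq_sub ha hD.le hb h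
  have e : (-a + D) / (2 * D) + b / (4 * a ^ 2)
      = -((a - D) ^ 2 * (2 * a + D) / (4 * a ^ 2 * D)) := by
    rw [show b = a ^ 2 - D ^ 2 by linarith]
    field_simp
    ring
  rw [e, abs_neg, abs_of_nonneg (by positivity)]
  calc (a - D) ^ 2 * (2 * a + D) / (4 * a ^ 2 * D)
        ≤ b ^ 2 / a ^ 2 * (3 * a) / (4 * a ^ 2 * D) := by
        gcongr
        · exact sq_sub_le_div_of_sq_eq_sq_sub ha hD.le hb h
        · linarith
    _ = 3 * b ^ 2 / (4 * a ^ 3 * D) := by field_simp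

end Roots

theorem hasDerivAt_exp_neg_div_mul (ν K t : ℝ) :
    HasDerivAt (fun τ => exp (-(τ / ν) * K)) (-(K / ν) * exp (-(K / ν) * t)) t := by
  refine (((hasDerivAt_id t).div_const ν).neg.mul_const K).exp.congr_deriv ?_
  rw [Pi.neg_apply, id_eq, show -(t / ν) * K = -(K / ν) * t by ring]
  ring

theorem deriv_J₁_sub (lp lm ν K t : ℝ) :
    deriv (fun τ => -lm * exp (lp * τ) / (lp - lm) - exp (-(τ / ν) * K)) t
      = -lm * lp / (lp - lm) * exp (lp * t) + K / ν * exp (-(K / ν) * t) := by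
  have h := ((((hasDerivAt_id t).const_mul lp).exp.const_mul (-lm)).div_const (lp - lm)).sub
    (hasDerivAt_exp_neg_div_mul ν K t)
  refine h.deriv.trans ?_
  simp only [id_eq]
  ring

theorem deriv_J₂_sub (lp lm ν K s t : ℝ) :
    deriv (fun τ => exp (lp * τ) / (lp - lm) - exp (-(τ / ν) * K) / (ν * s)) t
      = lp / (lp - lm) * exp (lp * t) + K / ν / (ν * s) * exp (-(K / ν) * t) := by
  have h := ((((hasDerivAt_id t).const_mul lp).exp).div_const (lp - lm)).sub
    ((hasDerivAt_exp_neg_div_mul ν K t).div_const (ν * s))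
  refine h.deriv.trans ?_
  simp only [id_eq]
  ring

section LowFrequency

variable {ν s K κ lp lm t : ℝ}

theorem abs_deriv_J₁_sub_le (hν : 0 < ν) (hs : 0 < s) (hK : 0 < K) (hκ : 0 < κ)
    (hD : κ * (ν / 2 * s) ≤ √(ν ^ 2 / 4 * s ^ 2 - s * K))
    (hlp : lp = -(ν / 2) * s + √(ν ^ 2 / 4 * s ^ 2 - s * K))
    (hlm : lm = -(ν / 2) * s - √(ν ^ 2 / 4 * s ^ 2 - s * K)) (ht : 0 ≤ t) :
    |deriv (fun τ => -lm * exp (lp * τ) / (lp - lm) - exp (-(τ / ν) * K)) t|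
      ≤ (4 / (κ * ν ^ 3) + 4 / ν ^ 4) * exp (-(K / ν) * t) * (t * (K ^ 3 / s) + K ^ 2 / s) := by
  set a := ν / 2 * s with ha_def
  set D := √(ν ^ 2 / 4 * s ^ 2 - s * K)
  have ha : 0 < a := by positivity
  have hb : 0 ≤ s * K := by positivity
  have hD0 : 0 < D := lt_of_lt_of_le (by positivity) hD
  have hDsq : D ^ 2 = a ^ 2 - s * K := by
    rw [sq_sqrt (sqrt_pos.1 hD0).le]; ring
  have hμ : s * K / (2 * a) = K / ν := by rw [ha_def]; field_simp
  have hlp' : lp = -a + D := by rw [hlp]; ring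
  have hderiv : deriv (fun τ => -lm * exp (lp * τ) / (lp - lm) - exp (-(τ / ν) * K)) t
      = -(s * K / (2 * D) - s * K / (2 * a)) * exp (lp * t)
        + K / ν * (exp (-(K / ν) * t) - exp (lp * t)) := by
    rw [deriv_J₁_sub, hμ, show -lm * lp = -(s * K) by rw [hlp, hlm]; linear_combination hDsq,
      show lp - lm = 2 * D by rw [hlp, hlm]; ring]
    ring
  rw [hderiv]
  refine abs_mul_exp_add_mul_exp_sub_le_of_le (by positivity)
    (hμ ▸ hlp' ▸ root_le_neg_half_div ha hDsq) ht (by positivity) (by positivity)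
    (by positivity) (by positivity) ?_ ?_
  · calc _ ≤ (s * K) ^ 2 / (2 * a ^ 2 * D) := by
          rw [abs_neg]; exact abs_div_sub_half_div_le ha hD0 hb hDsq
      _ ≤ (s * K) ^ 2 / (2 * a ^ 2 * (κ * a)) := by gcongr
      _ = 4 / (κ * ν ^ 3) * (K ^ 2 / s) := by rw [ha_def]; field_simp; ring
  · calc _ ≤ K / ν * ((s * K) ^ 2 / (2 * a ^ 3)) := by
          gcongr; rw [← hμ, hlp']; exact neg_half_div_sub_root_le ha hD0.le hb hDsq
      _ = 4 / ν ^ 4 * (K ^ 3 / s) := by rw [ha_def]; field_simp; ring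

theorem abs_deriv_J₂_sub_le (hν : 0 < ν) (hs : 0 < s) (hK : 0 < K) (hκ : 0 < κ)
    (hD : κ * (ν / 2 * s) ≤ √(ν ^ 2 / 4 * s ^ 2 - s * K))
    (hlp : lp = -(ν / 2) * s + √(ν ^ 2 / 4 * s ^ 2 - s * K))
    (hlm : lm = -(ν / 2) * s - √(ν ^ 2 / 4 * s ^ 2 - s * K)) (ht : 0 ≤ t) :
    |deriv (fun τ => exp (lp * τ) / (lp - lm) - exp (-(τ / ν) * K) / (ν * s)) t|
      ≤ (12 / (κ * ν ^ 4) + 4 / ν ^ 5) * exp (-(K / ν) * t)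
        * (t * (K ^ 3 / s ^ 2) + K ^ 2 / s ^ 2) := by
  set a := ν / 2 * s with ha_def
  set D := √(ν ^ 2 / 4 * s ^ 2 - s * K)
  have ha : 0 < a := by positivity
  have hb : 0 ≤ s * K := by positivity
  have hD0 : 0 < D := lt_of_lt_of_le (by positivity) hD
  have hDsq : D ^ 2 = a ^ 2 - s * K := by
    rw [sq_sqrt (sqrt_pos.1 hD0).le]; ring
  have hμ : s * K / (2 * a) = K / ν := by rw [ha_def]; field_simp
  have hμ' : s * K / (4 * a ^ 2) = K / ν / (ν * s) := by rw [ha_def]; field_simp; ring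
  have hlp' : lp = -a + D := by rw [hlp]; ring
  have hderiv : deriv (fun τ => exp (lp * τ) / (lp - lm) - exp (-(τ / ν) * K) / (ν * s)) t
      = ((-a + D) / (2 * D) + s * K / (4 * a ^ 2)) * exp (lp * t)
        + K / ν / (ν * s) * (exp (-(K / ν) * t) - exp (lp * t)) := by
    rw [deriv_J₂_sub, hμ', show lp - lm = 2 * D by rw [hlp, hlm]; ring, ← hlp']
    ring
  rw [hderiv]
  refine abs_mul_exp_add_mul_exp_sub_le_of_le (by positivity)
    (hμ ▸ hlp' ▸ root_le_neg_half_div ha hDsq) ht (by positivity) (by positivity)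
    (by positivity) (by positivity) ?_ ?_
  · calc _ ≤ 3 * (s * K) ^ 2 / (4 * a ^ 3 * D) := abs_root_div_add_le ha hD0 hb hDsq
      _ ≤ 3 * (s * K) ^ 2 / (4 * a ^ 3 * (κ * a)) := by gcongr
      _ = 12 / (κ * ν ^ 4) * (K ^ 2 / s ^ 2) := by rw [ha_def]; field_simp; ring
  · calc _ ≤ K / ν / (ν * s) * ((s * K) ^ 2 / (2 * a ^ 3)) := by
          gcongr; rw [← hμ, hlp']; exact neg_half_div_sub_root_le ha hD0.le hb hDsq
      _ = 4 / ν ^ 5 * (K ^ 3 / s ^ 2) := by rw [ha_def]; field_simp; ring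

end LowFrequency

theorem rpow_eq_pow_div_pow {r x y z : ℝ} (hr : 0 < r) (m n : ℕ) (h : z = x * m - y * n) :
    r ^ z = (r ^ x) ^ m / (r ^ y) ^ n := by
  rw [h, rpow_sub hr, rpow_mul_natCast hr.le, rpow_mul_natCast hr.le]

theorem le_half_rpow_mul_of_le {ν σ r : ℝ} (hν : 0 ≤ ν) (hσ : σ < 1 / 2) (hr : 0 ≤ r)
    (hrρ : r ≤ 1 / 2 * (ν / 2) ^ ((1 : ℝ) / (1 - 2 * σ))) :
    r ≤ (1 / 2) ^ (1 - 2 * σ) * (ν / 2 * r ^ (2 * σ)) := by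
  have hσ' : 0 < 1 - 2 * σ := by linarith
  have hr' : r ^ (1 - 2 * σ) ≤ (1 / 2) ^ (1 - 2 * σ) * (ν / 2) :=
    calc r ^ (1 - 2 * σ) ≤ (1 / 2 * (ν / 2) ^ ((1 : ℝ) / (1 - 2 * σ))) ^ (1 - 2 * σ) :=
          rpow_le_rpow hr hrρ hσ'.le
      _ = (1 / 2) ^ (1 - 2 * σ) * (ν / 2) := by
          rw [mul_rpow (by norm_num) (by positivity), ← rpow_mul (by positivity),
            one_div_mul_cancel hσ'.ne', rpow_one]
  calc r = r ^ (1 - 2 * σ) * r ^ (2 * σ) := by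
        rw [← rpow_add' hr (by norm_num), sub_add_cancel, rpow_one]
    _ ≤ (1 / 2) ^ (1 - 2 * σ) * (ν / 2) * r ^ (2 * σ) := by gcongr
    _ = _ := by ring

theorem sub_mul_le_sqrt_sq_sub_sq {a q r : ℝ} (hq0 : 0 ≤ q) (hq1 : q ≤ 1) (hr : 0 ≤ r)
    (hrq : r ≤ q * a) : (1 - q) * a ≤ √(a ^ 2 - r ^ 2) := by
  refine (le_abs_self _).trans (abs_le_sqrt ?_)
  nlinarith [mul_le_mul hrq hrq hr (hr.trans hrq),
    mul_nonneg (mul_nonneg hq0 (sub_nonneg.2 hq1)) (sq_nonneg a)]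

theorem stmt7_general (n : ℕ) (ν σ : ℝ) (hν : 0 < ν)
    (hσ : σ ∈ Set.Ioo (0:ℝ) (1/2)) (ρ : ℝ)
    (hρ : ρ = (1/2) * (ν/2) ^ ((1:ℝ)/(1 - 2*σ)))
    (lp lm : EuclideanSpace ℝ (Fin n) → ℝ)
    (hlp : ∀ ξ, lp ξ = -(ν/2) * ‖ξ‖ ^ (2*σ) + Real.sqrt (ν^2/4 * ‖ξ‖ ^ (4*σ) - ‖ξ‖^2))
    (hlm : ∀ ξ, lm ξ = -(ν/2) * ‖ξ‖ ^ (2*σ) - Real.sqrt (ν^2/4 * ‖ξ‖ ^ (4*σ) - ‖ξ‖^2)) :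
    ∃ C > 0, ∃ c > 0, ∀ t : ℝ, 0 ≤ t →
      ∀ ξ : EuclideanSpace ℝ (Fin n), 0 < ‖ξ‖ → ‖ξ‖ ≤ ρ →
        |deriv (fun s => -(lm ξ) * Real.exp (lp ξ * s) / (lp ξ - lm ξ) -
            Real.exp (-(s/ν) * ‖ξ‖ ^ (2*(1 - σ)))) t|
            ≤ C * Real.exp (-c * (1 + t) * ‖ξ‖ ^ (2*(1 - σ))) *
              (t * ‖ξ‖ ^ (2*(3 - 4*σ)) + ‖ξ‖ ^ (2*(2 - 3*σ))) ∧
        |deriv (fun s => Real.exp (lp ξ * s) / (lp ξ - lm ξ) -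
            Real.exp (-(s/ν) * ‖ξ‖ ^ (2*(1 - σ))) / (ν * ‖ξ‖ ^ (2*σ))) t|
            ≤ C * Real.exp (-c * (1 + t) * ‖ξ‖ ^ (2*(1 - σ))) *
              (t * ‖ξ‖ ^ (2*(3 - 5*σ)) + ‖ξ‖ ^ (4*(1 - 2*σ))) := by
  set q : ℝ := (1 / 2) ^ (1 - 2 * σ)
  have hq1 : q < 1 := rpow_lt_one (by norm_num) (by norm_num) (by linarith [hσ.2])
  have hκ : 0 < 1 - q := by linarith
  refine ⟨exp (ρ ^ (2 * (1 - σ)) / ν) * ((4 / ((1 - q) * ν ^ 3) + 4 / ν ^ 4)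
    + (12 / ((1 - q) * ν ^ 4) + 4 / ν ^ 5)), by positivity, 1 / ν, by positivity,
    fun t ht ξ hξ hξρ => ?_⟩
  set s := ‖ξ‖ ^ (2 * σ)
  set K := ‖ξ‖ ^ (2 * (1 - σ))
  have hsK : ‖ξ‖ ^ 2 = s * K := by
    rw [← rpow_add hξ, show 2 * σ + 2 * (1 - σ) = 2 by ring, rpow_two]
  have hs2 : ‖ξ‖ ^ (4 * σ) = s ^ 2 := by
    rw [← rpow_mul_natCast hξ.le]; ring_nf
  have hD : (1 - q) * (ν / 2 * s) ≤ √(ν ^ 2 / 4 * s ^ 2 - s * K) := by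
    rw [← hsK, show ν ^ 2 / 4 * s ^ 2 = (ν / 2 * s) ^ 2 by ring]
    exact sub_mul_le_sqrt_sq_sub_sq (by positivity) hq1.le hξ.le
      (le_half_rpow_mul_of_le hν.le hσ.2 hξ.le (hρ ▸ hξρ))
  have hlp' := hlp ξ
  have hlm' := hlm ξ
  rw [hs2, hsK] at hlp' hlm'
  have hKρ : K ≤ ρ ^ (2 * (1 - σ)) := rpow_le_rpow hξ.le hξρ (by linarith [hσ.2])
  have hweight (m k : ℕ) (z : ℝ) (hz : z = 2 * (1 - σ) * m - 2 * σ * k) :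
      ‖ξ‖ ^ z = K ^ m / s ^ k :=
    rpow_eq_pow_div_pow hξ m k hz
  rw [hweight 3 1 _ (by push_cast; ring), hweight 2 1 _ (by push_cast; ring),
    hweight 3 2 _ (by push_cast; ring), hweight 2 2 _ (by push_cast; ring), pow_one]
  constructor
  · exact (abs_deriv_J₁_sub_le hν (by positivity) (by positivity) hκ hD hlp' hlm' ht).trans
      (mul_exp_neg_div_mul_le hν.le hKρ (by positivity) (le_add_of_nonneg_right (by positivity))
        (by positivity))
  · exact (abs_deriv_J₂_sub_le hν (by positivity) (by positivity) hκ hD hlp' hlm' ht).trans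
      (mul_exp_neg_div_mul_le hν.le hKρ (by positivity) (le_add_of_nonneg_left (by positivity))
        (by positivity))

/-- Low-frequency approximation of the time derivatives of `𝒥₁` and `𝒥₂` by the time
derivatives of the parabolic kernels, for `σ ∈ (0,1/2)`. -/
theorem stmt7 (n : ℕ) (hn : 1 ≤ n) (ν σ : ℝ) (hν : 0 < ν)
    (hσ : σ ∈ Set.Ioo (0:ℝ) (1/2)) (ρ : ℝ)
    (hρ : ρ = (1/2) * (ν/2) ^ ((1:ℝ)/(1 - 2*σ)))
    (lp lm : EuclideanSpace ℝ (Fin n) → ℝ)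
    (hlp : ∀ ξ, lp ξ = -(ν/2) * ‖ξ‖ ^ (2*σ) + Real.sqrt (ν^2/4 * ‖ξ‖ ^ (4*σ) - ‖ξ‖^2))
    (hlm : ∀ ξ, lm ξ = -(ν/2) * ‖ξ‖ ^ (2*σ) - Real.sqrt (ν^2/4 * ‖ξ‖ ^ (4*σ) - ‖ξ‖^2)) :
    ∃ C > 0, ∃ c > 0, ∀ t : ℝ, 0 ≤ t →
      ∀ ξ : EuclideanSpace ℝ (Fin n), 0 < ‖ξ‖ → ‖ξ‖ ≤ ρ →
        |deriv (fun s => -(lm ξ) * Real.exp (lp ξ * s) / (lp ξ - lm ξ) -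
            Real.exp (-(s/ν) * ‖ξ‖ ^ (2*(1 - σ)))) t|
            ≤ C * Real.exp (-c * (1 + t) * ‖ξ‖ ^ (2*(1 - σ))) *
              (t * ‖ξ‖ ^ (2*(3 - 4*σ)) + ‖ξ‖ ^ (2*(2 - 3*σ))) ∧
        |deriv (fun s => Real.exp (lp ξ * s) / (lp ξ - lm ξ) -
            Real.exp (-(s/ν) * ‖ξ‖ ^ (2*(1 - σ))) / (ν * ‖ξ‖ ^ (2*σ))) t|
            ≤ C * Real.exp (-c * (1 + t) * ‖ξ‖ ^ (2*(1 - σ))) *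
              (t * ‖ξ‖ ^ (2*(3 - 5*σ)) + ‖ξ‖ ^ (4*(1 - 2*σ))) :=
  stmt7_general n ν σ hν hσ ρ hρ lp lm hlp hlm
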